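/- arXiv:1306.2976 — 4 statements merged into one kernel-verified Lean document; each statement's English description precedes it below -/
import Mathlib

section
/- Let S be a finite set, and let {Δ'_v}_{v∈S} and {Δ_v}_{v∈S} be collections of positive real numbers with Δ'_v < Δ_v for all v ∈ S. Then there exists a finite set Ξ of weighting functions ξ' : S → [0,1] with ∑_{v∈S} ξ'_v = 1, such that for any function ξ : S → ℝ_{≥0} satisfying ∑_{v∈S} ξ_v ≥ 1, there is some ξ' ∈ Ξ with ξ'_v Δ'_v ≤ ξ_v Δ_v for all v ∈ S. -/
/-!
Take `Ξ` to be the weighting functions with values in `(1/N)ℕ`, where `N` is so large that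
`(N + #S) Δ'_v ≤ N Δ_v` for all `v`. Given `ξ`, put `a_v = ξ_v Δ_v / Δ'_v`; then
`N ∑ a_v ≥ N + #S`, so the integers `⌊N a_v⌋` sum to at least `N`. Lowering some of them to
make the sum exactly `N` gives `k` with `k_v / N ≤ a_v`, and `k / N ∈ Ξ` is the required `ξ'`.
-/

open Finset Filter

lemma Fintype.exists_le_sum_eq_of_le_sum {ι : Type*} [Fintype ι] [DecidableEq ι] {k : ι → ℕ} :
    ∀ {N : ℕ}, N ≤ ∑ i, k i → ∃ k' ≤ k, ∑ i, k' i = N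
  | 0, _ => ⟨0, fun _ => Nat.zero_le _, by simp⟩
  | N + 1, h => by
    obtain ⟨k', hk'k, hk'N⟩ := exists_le_sum_eq_of_le_sum (Nat.le_of_succ_le h)
    obtain ⟨v, hv⟩ : ∃ v, k' v < k v := by
      by_contra! hk
      have := sum_le_sum fun i (_ : i ∈ univ) => hk i
      omega
    refine ⟨k' + Pi.single v 1, fun i => ?_, by simp [sum_add_distrib, hk'N]⟩
    rcases eq_or_ne i v with rfl | hi
    · simpa using hv
    · simpa [hi] using hk'k i

lemma exists_nat_add_mul_le_mul {S : Type*} [Finite S] {Δ' Δ : S → ℝ} (m : ℝ)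
    (hΔ : ∀ v, Δ' v < Δ v) : ∃ N : ℕ, 0 < N ∧ ∀ v, (N + m) * Δ' v ≤ N * Δ v := by
  have key : ∀ v, ∀ᶠ N : ℕ in atTop, (N + m) * Δ' v ≤ N * Δ v := fun v => by
    have : Tendsto (fun N : ℕ => (N : ℝ) * (Δ v - Δ' v)) atTop atTop :=
      tendsto_natCast_atTop_atTop.atTop_mul_const (sub_pos.2 (hΔ v))
    filter_upwards [this.eventually_ge_atTop (m * Δ' v)] with N hN
    linarith
  exact ((eventually_gt_atTop 0).and (eventually_all.2 key)).exists

noncomputable def weightGrid (S : Type*) [Fintype S] [DecidableEq S] (N : ℕ) : Finset (S → ℝ) :=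
  (univ.piAntidiag N).image fun k v => (k v : ℝ) / N

section weightGrid

variable {S : Type*} [Fintype S] [DecidableEq S] {N : ℕ}

lemma mem_weightGrid_iff {ξ : S → ℝ} :
    ξ ∈ weightGrid S N ↔ ∃ k : S → ℕ, ∑ v, k v = N ∧ (fun v => (k v : ℝ) / N) = ξ := by
  simp [weightGrid]

lemma weightGrid_isWeighting (hN : N ≠ 0) {ξ : S → ℝ} (hξ : ξ ∈ weightGrid S N) :
    (∀ v, ξ v ∈ Set.Icc (0 : ℝ) 1) ∧ ∑ v, ξ v = 1 := by
  obtain ⟨k, hk, rfl⟩ := mem_weightGrid_iff.1 hξ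
  have hN' : (0 : ℝ) < N := by positivity
  refine ⟨fun v => ⟨by positivity, ?_⟩, ?_⟩
  · rw [div_le_one hN', ← hk]
    exact_mod_cast single_le_sum (fun i _ => Nat.zero_le (k i)) (mem_univ v)
  · rw [← sum_div, div_eq_one_iff_eq hN'.ne', ← hk]
    push_cast; rfl

lemma exists_mem_weightGrid_le (hN : 0 < N) {a : S → ℝ} (ha : ∀ v, 0 ≤ a v)
    (hsum : N + Fintype.card S ≤ N * ∑ v, a v) :
    ∃ ξ ∈ weightGrid S N, ∀ v, ξ v ≤ a v := by
  have hfloor : N ≤ ∑ v, ⌊N * a v⌋₊ := by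
    have : (N : ℝ) ≤ ∑ v, (⌊N * a v⌋₊ : ℝ) := by
      have := sum_le_sum fun v (_ : v ∈ univ) => (Nat.lt_floor_add_one (N * a v)).le
      simp only [sum_add_distrib, ← mul_sum, sum_const, card_univ, nsmul_eq_mul, mul_one] at this
      linarith
    exact_mod_cast this
  obtain ⟨k, hk, hkN⟩ := Fintype.exists_le_sum_eq_of_le_sum hfloor
  refine ⟨fun v => k v / N, mem_weightGrid_iff.2 ⟨k, hkN, rfl⟩, fun v => ?_⟩
  rw [div_le_iff₀' (by exact_mod_cast hN)]
  calc (k v : ℝ) ≤ ⌊N * a v⌋₊ := by exact_mod_cast hk v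
    _ ≤ N * a v := Nat.floor_le (mul_nonneg N.cast_nonneg (ha v))

end weightGrid

/-- Lemma 7.2: a finite set `Ξ` of weighting functions dominating all
nonnegative functions `ξ` with `∑ ξ_v ≥ 1` after rescaling `Δ'_v < Δ_v`. -/
theorem stmt_1 (S : Type*) [Fintype S] (Δ' Δ : S → ℝ)
    (hΔ' : ∀ v, 0 < Δ' v) (hΔ : ∀ v, Δ' v < Δ v) :
    ∃ Ξ : Finset (S → ℝ),
      (∀ ξ' ∈ Ξ, (∀ v, ξ' v ∈ Set.Icc (0:ℝ) 1) ∧ ∑ v, ξ' v = 1) ∧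
      ∀ ξ : S → ℝ, (∀ v, 0 ≤ ξ v) → 1 ≤ ∑ v, ξ v →
        ∃ ξ' ∈ Ξ, ∀ v, ξ' v * Δ' v ≤ ξ v * Δ v := by
  classical
  obtain ⟨N, hN, hNΔ⟩ := exists_nat_add_mul_le_mul (Fintype.card S) hΔ
  refine ⟨weightGrid S N, fun _ => weightGrid_isWeighting hN.ne', fun ξ hξ hξ1 => ?_⟩
  let a v := ξ v * Δ v / Δ' v
  have ha : ∀ v, (N + Fintype.card S) * ξ v ≤ N * a v := fun v => by
    rw [mul_div_assoc', le_div_iff₀ (hΔ' v)]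
    linarith [mul_le_mul_of_nonneg_left (hNΔ v) (hξ v)]
  have hsum : N + Fintype.card S ≤ N * ∑ v, a v := calc
    (N + Fintype.card S : ℝ) ≤ (N + Fintype.card S) * ∑ v, ξ v :=
      le_mul_of_one_le_right (by positivity) hξ1
    _ ≤ N * ∑ v, a v := by simpa only [mul_sum] using sum_le_sum fun v _ => ha v
  obtain ⟨ξ', hξ'Ξ, hξ'a⟩ := exists_mem_weightGrid_le hN
    (fun v => div_nonneg (mul_nonneg (hξ v) ((hΔ' v).trans (hΔ v)).le) (hΔ' v).le) hsum
  exact ⟨ξ', hξ'Ξ, fun v => (le_div_iff₀ (hΔ' v)).1 (hξ'a v)⟩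
end

section
/- Let V be a finite-dimensional vector space over a field k, equipped for each element v of a finite index set S with a decreasing filtration V = V^0_v ⊇ V^1_v ⊇ ⋯ ⊇ V^{r_v}_v ⊇ V^{r_v+1}_v = {0} and constants 0 < c_{v,1} < ⋯ < c_{v,r_v}. Define the slope of a nonzero subspace W ⊆ V by μ(W) = ∑_{v∈S} (1/dim W) ∑_{j=1}^{r_v} c_{v,j} (dim(W ∩ V^j_v) − dim(W ∩ V^{j+1}_v)). Then among subspaces of maximal slope μ₀ there is a unique one of maximal dimension W_HN, and every subspace W' with μ(W') = μ₀ satisfies W' ⊆ W_HN. -/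
/-!
Put `d(W) = dim W · μ(W) = ∑_v ∑_j c_{v,j} (dim (W ∩ V^j_v) - dim (W ∩ V^{j+1}_v))`. Abel summation
(with `c_{v,0} = 0` and `V^{r_v+1}_v = 0`) writes `d` as a combination, with the nonnegative weights
`c_{v,j} - c_{v,j-1}`, of the functions `W ↦ dim (W ∩ U)`, which are supermodular. So `d` is
supermodular, and since `dim` is modular and `d W ≤ μ₀ dim W` for all `W`, the subspaces with
`d W = μ₀ dim W` are closed under sums. By noetherianity this family has a largest member, which
is nonzero because some nonzero subspace has slope `μ₀`; it is `W_HN`.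
-/

open Finset Module

theorem Finset.sum_Icc_mul_sub_succ (c a : ℕ → ℝ) (r : ℕ) :
    ∑ j ∈ Icc 1 r, c j * (a j - a (j + 1)) =
      ∑ j ∈ Icc 1 r, (c j - c (j - 1)) * a j + c 0 * a 1 - c r * a (r + 1) := by
  induction r with
  | zero => simp
  | succ n ih =>
    rw [sum_Icc_succ_top (by omega), sum_Icc_succ_top (by omega), ih, Nat.add_sub_cancel]
    ring

section Supermodular

variable {α : Type*} [Lattice α]

def IsSupermodular (D : α → ℝ) : Prop :=
  ∀ a b, D a + D b ≤ D (a ⊔ b) + D (a ⊓ b)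

theorem IsSupermodular.const_mul {D : α → ℝ} (hD : IsSupermodular D) {w : ℝ} (hw : 0 ≤ w) :
    IsSupermodular fun a => w * D a := fun a b => by
  rw [← mul_add, ← mul_add]
  exact mul_le_mul_of_nonneg_left (hD a b) hw

theorem IsSupermodular.sum {ι : Type*} (s : Finset ι) {D : ι → α → ℝ}
    (hD : ∀ i ∈ s, IsSupermodular (D i)) : IsSupermodular fun a => ∑ i ∈ s, D i a :=
  fun a b => by
    simp only [← sum_add_distrib]
    exact sum_le_sum fun i hi => hD i hi a b

end Supermodular

section Finrank

variable {k V : Type*} [DivisionRing k] [AddCommGroup V] [Module k V] [FiniteDimensional k V]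

theorem isSupermodular_finrank_inf (U : Submodule k V) :
    IsSupermodular fun W : Submodule k V => (finrank k ↥(W ⊓ U) : ℝ) := fun W₁ W₂ => by
  have hsup : W₁ ⊓ U ⊔ W₂ ⊓ U ≤ (W₁ ⊔ W₂) ⊓ U :=
    sup_le (inf_le_inf_right U le_sup_left) (inf_le_inf_right U le_sup_right)
  have hinf : W₁ ⊓ U ⊓ (W₂ ⊓ U) = W₁ ⊓ W₂ ⊓ U := by rw [inf_inf_inf_comm, inf_idem]
  have := Submodule.finrank_sup_add_finrank_inf_eq (W₁ ⊓ U) (W₂ ⊓ U)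
  rw [hinf] at this
  have hmono := Submodule.finrank_mono hsup
  dsimp only
  exact_mod_cast (by omega)

theorem supClosed_setOf_eq_mul_finrank {D : Submodule k V → ℝ} (hD : IsSupermodular D)
    {μ₀ : ℝ} (hle : ∀ W, D W ≤ μ₀ * finrank k W) :
    SupClosed {W | D W = μ₀ * finrank k W} := fun W₁ h₁ W₂ h₂ => by
  have hdim : (finrank k ↥(W₁ ⊔ W₂) : ℝ) + finrank k ↥(W₁ ⊓ W₂) =
      finrank k W₁ + finrank k W₂ := by
    exact_mod_cast Submodule.finrank_sup_add_finrank_inf_eq W₁ W₂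
  have := hD W₁ W₂
  have := hle (W₁ ⊓ W₂)
  have := hle (W₁ ⊔ W₂)
  have := congrArg (μ₀ * ·) hdim
  simp only [mul_add, Set.mem_ofPred_eq] at h₁ h₂ this ⊢
  linarith

theorem exists_isGreatest_setOf_eq_mul_finrank {D : Submodule k V → ℝ} (hD : IsSupermodular D)
    (hD_bot : D ⊥ = 0) {μ₀ : ℝ} (hle : ∀ W, D W ≤ μ₀ * finrank k W) :
    ∃ G, IsGreatest {W | D W = μ₀ * finrank k W} G :=
  ⟨_, CompleteLattice.WellFoundedGT.isSupClosedCompact _ inferInstance _ ⟨⊥, by simp [hD_bot]⟩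
    (supClosed_setOf_eq_mul_finrank hD hle), fun _ hW => le_sSup hW⟩

end Finrank

section FiltrationDegree

variable {k V : Type*} [DivisionRing k] [AddCommGroup V] [Module k V]

noncomputable def filtrationDegree (F : ℕ → Submodule k V) (c : ℕ → ℝ) (r : ℕ)
    (W : Submodule k V) : ℝ :=
  ∑ j ∈ Icc 1 r, c j * ((finrank k ↥(W ⊓ F j) : ℝ) - finrank k ↥(W ⊓ F (j + 1)))

@[simp]
theorem filtrationDegree_bot (F : ℕ → Submodule k V) (c : ℕ → ℝ) (r : ℕ) :
    filtrationDegree F c r ⊥ = 0 :=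
  sum_eq_zero fun j _ => by rw [bot_inf_eq, bot_inf_eq]; simp

/-- `Function.update c 0 0` implements the convention `c₀ = 0`. -/
theorem filtrationDegree_eq_sum_mul_finrank {F : ℕ → Submodule k V} {r : ℕ}
    (hF : F (r + 1) = ⊥) (c : ℕ → ℝ) (W : Submodule k V) :
    filtrationDegree F c r W = ∑ j ∈ Icc 1 r,
      (Function.update c 0 0 j - Function.update c 0 0 (j - 1)) * finrank k ↥(W ⊓ F j) := by
  have hc : ∀ j ∈ Icc 1 r, c j = Function.update c 0 0 j := fun j hj =>
    (Function.update_of_ne (by grind) _ _).symm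
  rw [filtrationDegree, sum_congr rfl fun j hj => by rw [hc j hj], sum_Icc_mul_sub_succ, hF]
  simp

theorem isSupermodular_filtrationDegree [FiniteDimensional k V] {F : ℕ → Submodule k V}
    {c : ℕ → ℝ} {r : ℕ} (hF : F (r + 1) = ⊥) (hc_nonneg : ∀ j, 1 ≤ j → j ≤ r → 0 ≤ c j)
    (hc_mono : ∀ j, 1 ≤ j → j < r → c j ≤ c (j + 1)) :
    IsSupermodular (filtrationDegree F c r) := by
  have hw : ∀ j ∈ Icc 1 r, 0 ≤ Function.update c 0 0 j - Function.update c 0 0 (j - 1) := by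
    intro j hj
    obtain ⟨hj₁, hjr⟩ := mem_Icc.mp hj
    rcases hj₁.eq_or_lt with rfl | hj₁
    · simpa using hc_nonneg 1 le_rfl hjr
    · obtain ⟨i, rfl⟩ : ∃ i, j = i + 2 := ⟨j - 2, by omega⟩
      simpa [Function.update_of_ne] using hc_mono (i + 1) (by omega) (by omega)
  rw [funext (filtrationDegree_eq_sum_mul_finrank hF c)]
  exact IsSupermodular.sum _ fun j hj => (isSupermodular_finrank_inf (F j)).const_mul (hw j hj)

end FiltrationDegree

theorem stmt_2_general (k V : Type*) [Field k] [AddCommGroup V] [Module k V]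
    [FiniteDimensional k V]
    (S : Type*) [Fintype S]
    (r : S → ℕ) (F : S → ℕ → Submodule k V)
    (hFend : ∀ v, F v (r v + 1) = ⊥)
    (c : S → ℕ → ℝ)
    (hcpos : ∀ v j, 1 ≤ j → j ≤ r v → 0 < c v j)
    (hcmono : ∀ v j, 1 ≤ j → j < r v → c v j < c v (j + 1))
    (μ : Submodule k V → ℝ)
    (hμ : ∀ W : Submodule k V, μ W = ∑ v, (1 / (Module.finrank k W : ℝ)) *
      ∑ j ∈ Finset.Icc 1 (r v), c v j *
        ((Module.finrank k ↥(W ⊓ F v j) : ℝ) -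
          (Module.finrank k ↥(W ⊓ F v (j + 1)) : ℝ)))
    (μ₀ : ℝ)
    (hmax : ∀ W : Submodule k V, W ≠ ⊥ → μ W ≤ μ₀)
    (hach : ∃ W : Submodule k V, W ≠ ⊥ ∧ μ W = μ₀) :
    ∃! WHN : Submodule k V, WHN ≠ ⊥ ∧ μ WHN = μ₀ ∧
      ∀ W' : Submodule k V, W' ≠ ⊥ → μ W' = μ₀ → W' ≤ WHN := by
  let D : Submodule k V → ℝ := fun W => ∑ v, filtrationDegree (F v) (c v) (r v) W
  have hD : IsSupermodular D := IsSupermodular.sum _ fun v _ =>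
    isSupermodular_filtrationDegree (hFend v) (fun j h₁ h₂ => (hcpos v j h₁ h₂).le)
      (fun j h₁ h₂ => (hcmono v j h₁ h₂).le)
  have hμD : ∀ W, μ W = D W / finrank k W := fun W => by
    rw [hμ, ← mul_sum, one_div_mul_eq_div]
    rfl
  have hdim_pos : ∀ W : Submodule k V, W ≠ ⊥ → (0 : ℝ) < finrank k W := fun _ hW =>
    Nat.cast_pos.mpr (Submodule.one_le_finrank_iff.mpr hW)
  have hμ_eq : ∀ W ≠ ⊥, μ W = μ₀ ↔ D W = μ₀ * finrank k W := fun W hW => by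
    rw [hμD, div_eq_iff (hdim_pos W hW).ne']
  have hle : ∀ W, D W ≤ μ₀ * finrank k W := fun W => by
    rcases eq_or_ne W ⊥ with rfl | hW
    · simp [D]
    · rw [← div_le_iff₀ (hdim_pos W hW), ← hμD]
      exact hmax W hW
  obtain ⟨G, hG, hG_max⟩ := exists_isGreatest_setOf_eq_mul_finrank hD (by simp [D]) hle
  obtain ⟨W₀, hW₀, hW₀μ⟩ := hach
  have hG_ne : G ≠ ⊥ := ne_bot_of_le_ne_bot hW₀ (hG_max ((hμ_eq W₀ hW₀).1 hW₀μ))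
  refine ⟨G, ⟨hG_ne, (hμ_eq G hG_ne).2 hG, fun W hW hWμ => hG_max ((hμ_eq W hW).1 hWμ)⟩, ?_⟩
  rintro W ⟨hW, hWμ, hW_max⟩
  exact le_antisymm (hG_max ((hμ_eq W hW).1 hWμ)) (hW_max G hG_ne ((hμ_eq G hG_ne).2 hG))

/-- Existence and maximality of the maximal destabilizing subspace `W_HN` for the
Faltings–Wüstholz slope attached to filtrations `V = V⁰_v ⊇ ⋯ ⊇ V^{r_v+1}_v = 0`
with constants `0 < c_{v,1} < ⋯ < c_{v,r_v}`. -/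
theorem stmt_2 (k V : Type*) [Field k] [AddCommGroup V] [Module k V]
    [FiniteDimensional k V]
    (S : Type*) [Fintype S]
    (r : S → ℕ) (F : S → ℕ → Submodule k V)
    (hF0 : ∀ v, F v 0 = ⊤)
    (hFdec : ∀ v j, F v (j + 1) ≤ F v j)
    (hFend : ∀ v, F v (r v + 1) = ⊥)
    (c : S → ℕ → ℝ)
    (hcpos : ∀ v j, 1 ≤ j → j ≤ r v → 0 < c v j)
    (hcmono : ∀ v j, 1 ≤ j → j < r v → c v j < c v (j + 1))
    (μ : Submodule k V → ℝ)
    (hμ : ∀ W : Submodule k V, μ W = ∑ v, (1 / (Module.finrank k W : ℝ)) *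
      ∑ j ∈ Finset.Icc 1 (r v), c v j *
        ((Module.finrank k ↥(W ⊓ F v j) : ℝ) -
          (Module.finrank k ↥(W ⊓ F v (j + 1)) : ℝ)))
    (μ₀ : ℝ)
    (hmax : ∀ W : Submodule k V, W ≠ ⊥ → μ W ≤ μ₀)
    (hach : ∃ W : Submodule k V, W ≠ ⊥ ∧ μ W = μ₀) :
    ∃! WHN : Submodule k V, WHN ≠ ⊥ ∧ μ WHN = μ₀ ∧
      ∀ W' : Submodule k V, W' ≠ ⊥ → μ W' = μ₀ → W' ≤ WHN :=
  stmt_2_general k V S r F hFend c hcpos hcmono μ hμ μ₀ hmax hach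
end

section
/- Let C be an irreducible curve over a number field k, x ∈ C(ℚ̄), v a place of k extended to ℚ̄, and L an ample line bundle on C. Then α_x(L) = (1/2)·ε_x(L) if and only if: C is k-rational, C is unibranch at x (the normalization map φ : ℙ¹ → C has exactly one preimage of x), the residue field κ(x) is not equal to k, and κ(x) ⊆ k_v. -/
/-!
Since `r_q ≤ 2` and `m_q ≤ ∑ m`, every branch has `r_q m_q ≤ 2 ∑ m`, with equality only when
`r_q = 2` and, the multiplicities being positive, `q` is the only branch. So the branch realising
the minimum `α_x(L) = d / (r_q m_q)` gives `ε_x(L) / 2 = d / (2 ∑ m)` exactly in that case, and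
`α_x(L) < ∞` already forces `C` to be `k`-rational.
-/

theorem Fintype.mul_apply_eq_mul_sum_iff {ι : Type*} [Fintype ι] {f : ι → ℕ}
    (hf : ∀ i, 0 < f i) {c n : ℕ} (hn : 0 < n) (hc : c ≤ n) (q : ι) :
    c * f q = n * ∑ i, f i ↔ c = n ∧ ∀ i, i = q := by
  classical
  have hsplit : f q + ∑ i ∈ Finset.univ.erase q, f i = ∑ i, f i :=
    Finset.add_sum_erase _ _ (Finset.mem_univ q)
  constructor
  · intro h
    have hcf : c * f q ≤ n * f q := Nat.mul_le_mul_right _ hc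
    rw [← hsplit, mul_add] at h
    have hrest : ∑ i ∈ Finset.univ.erase q, f i = 0 :=
      (Nat.mul_eq_zero.1 (by omega)).resolve_left hn.ne'
    rw [hrest, mul_zero, add_zero] at h
    refine ⟨Nat.eq_of_mul_eq_mul_right (hf q) h, fun i => ?_⟩
    by_contra hiq
    exact (hf i).ne' <|
      Finset.sum_eq_zero_iff.1 hrest i (Finset.mem_erase.2 ⟨hiq, Finset.mem_univ i⟩)
  · rintro ⟨rfl, huniq⟩
    have hrest : ∑ i ∈ Finset.univ.erase q, f i = 0 :=
      Finset.sum_eq_zero fun i hi => absurd (huniq i) (Finset.ne_of_mem_erase hi)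
    rw [← hsplit, hrest, add_zero]

section BranchIndex

variable {P E : Prop} {r : ℕ}

theorem branchIndex_le_two (h : (¬P → r = 0) ∧ (P → E → r = 1) ∧ (P → ¬E → r = 2)) :
    r ≤ 2 := by
  by_cases P <;> by_cases E <;> grind

theorem branchIndex_eq_two_iff (h : (¬P → r = 0) ∧ (P → E → r = 1) ∧ (P → ¬E → r = 2)) :
    r = 2 ↔ P ∧ ¬E := by
  by_cases P <;> by_cases E <;> grind

end BranchIndex

theorem branchTerm_eq_half_seshadri_iff {Q : Type*} [Fintype Q] {d : ℝ} (hd : 0 < d)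
    {m : Q → ℕ} (hm : ∀ q, 0 < m q) {r : ℕ} (hr : r ≤ 2) (q : Q) :
    (if r = 0 then (⊤ : EReal) else ((d / (r * m q) : ℝ) : EReal)) =
        (((d / ∑ q, (m q : ℝ)) / 2 : ℝ) : EReal) ↔
      r = 2 ∧ ∀ q', q' = q := by
  by_cases hr0 : r = 0
  · simp [hr0]
  rw [if_neg hr0, EReal.coe_eq_coe_iff, div_div, div_eq_mul_inv, div_eq_mul_inv,
    mul_right_inj' hd.ne', inv_inj, mul_comm _ (2 : ℝ),
    ← Fintype.mul_apply_eq_mul_sum_iff hm two_pos hr q]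
  exact_mod_cast Iff.rfl

/-- `Q = φ⁻¹(x)` for the normalization `φ : ℙ¹ → C`, `mQ q` is the multiplicity of the branch
through `x` corresponding to `q`, `kappaSub q` and `kappaEqk q` stand for `κ(q) ⊆ k_v` and
`κ(q) = k` (recall `κ(q) = κ(x)`), `α = α_x(L)` and `ε = ε_x(L)`. -/
theorem stmt_15 (Q : Type*) [Fintype Q] [Nonempty Q]
    (d : ℝ) (hd : 0 < d)
    (mQ : Q → ℕ) (hm : ∀ q, 0 < mQ q)
    (kappaSub : Q → Prop) (kappaEqk : Q → Prop)
    (r : Q → ℕ)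
    (hr : ∀ q, (¬ kappaSub q → r q = 0) ∧ (kappaSub q → kappaEqk q → r q = 1) ∧
      (kappaSub q → ¬ kappaEqk q → r q = 2))
    (kRational : Prop)
    (α : EReal) (ε : ℝ)
    (hε : ε = d / ∑ q, (mQ q : ℝ))
    (hαformula : kRational →
      α = ⨅ q : Q, (if r q = 0 then (⊤ : EReal)
        else ((d / (r q * mQ q) : ℝ) : EReal)))
    (hαfin : α ≠ ⊤ → kRational) :
    α = ((ε / 2 : ℝ) : EReal) ↔
      (kRational ∧ (∀ q q' : Q, q = q') ∧
        (∀ q, ¬ kappaEqk q) ∧ (∀ q, kappaSub q)) := by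
  subst hε
  have hterm q := branchTerm_eq_half_seshadri_iff hd hm (branchIndex_le_two (hr q)) q
  constructor
  · intro h
    have hk := hαfin (h ▸ EReal.coe_ne_top _)
    obtain ⟨q, hq⟩ := exists_eq_ciInf_of_finite (f := fun q : Q =>
      if r q = 0 then (⊤ : EReal) else ((d / (r q * mQ q) : ℝ) : EReal))
    rw [hαformula hk, ← hq, hterm] at h
    obtain ⟨hr2, huniq⟩ := h
    obtain ⟨hsub, hne⟩ := (branchIndex_eq_two_iff (hr q)).1 hr2
    exact ⟨hk, fun a b => (huniq a).trans (huniq b).symm,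
      fun q' => huniq q' ▸ hne, fun q' => huniq q' ▸ hsub⟩
  · rintro ⟨hk, hsing, hne, hsub⟩
    let q₀ : Q := Classical.arbitrary Q
    have : Unique Q := ⟨⟨q₀⟩, fun q => hsing q q₀⟩
    rw [hαformula hk, iInf_unique, hterm]
    exact ⟨(branchIndex_eq_two_iff (hr _)).2 ⟨hsub _, hne _⟩, fun q => hsing _ _⟩
end

section
/- Let S be a finite set and for each v ∈ S let ε_v > 0 and let α_v ∈ (0, ∞] be given. Suppose that for every weighting function ξ : S → [0,1] with ∑ξ_v = 1, there exists v ∈ S with ξ_v ≠ 0 such that α_v ≥ ε_v/(2ξ_v). Then ∑_{v∈S} ε_v/α_v ≤ 2 (with ε_v/∞ interpreted as 0). Conversely, if ∑_{v∈S} ε_v/α_v ≤ 2 then for every weighting function ξ there exists v ∈ S with ξ_v ≠ 0 and α_v ≥ ε_v/(2ξ_v). -/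
/-!
Write `r_v = ε_v / α_v`. The choice `ξ = r / ∑ r` forces some `v` with `r_v > 0` and
`r_v ≤ 2 r_v / ∑ r`, i.e. `∑ r ≤ 2`. Conversely, if every `v` in the support of `ξ` had
`2 ξ_v < r_v`, summing would give `2 = ∑ 2 ξ_v < ∑ r`.
-/

open Finset

theorem forall_mem_stdSimplex_exists_le_mul_iff {S : Type*} [Fintype S] {r : S → ℝ}
    (hr : ∀ v, 0 ≤ r v) {c : ℝ} (hc : 0 ≤ c) :
    (∀ ξ ∈ stdSimplex ℝ S, ∃ v, ξ v ≠ 0 ∧ r v ≤ c * ξ v) ↔ ∑ v, r v ≤ c := by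
  constructor
  · intro h
    by_contra! hcT
    set T := ∑ v, r v
    have hT : 0 < T := hc.trans_lt hcT
    obtain ⟨v, hξv, hv⟩ := h (fun v ↦ r v / T)
      ⟨fun v ↦ div_nonneg (hr v) hT.le, by rw [← sum_div, div_self hT.ne']⟩
    have hrv : 0 < r v := (hr v).lt_of_ne' (div_ne_zero_iff.mp hξv).1
    have : c * (r v / T) < r v := by
      rw [← mul_div_assoc, div_lt_iff₀ hT, mul_comm c]
      exact mul_lt_mul_of_pos_left hcT hrv
    linarith
  · rintro hsum ξ ⟨hξ_nonneg, hξ_sum⟩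
    by_contra! h
    obtain ⟨v₀, hv₀⟩ : ∃ v, ξ v ≠ 0 := by
      by_contra! h₀
      simp [h₀] at hξ_sum
    have hle : ∀ v, c * ξ v ≤ r v := fun v ↦ by
      by_cases hv : ξ v = 0
      · simpa [hv] using hr v
      · exact (h v hv).le
    have : ∑ v, c * ξ v < ∑ v, r v :=
      sum_lt_sum (fun v _ ↦ hle v) ⟨v₀, mem_univ _, h v₀ hv₀⟩
    rw [← mul_sum, hξ_sum, mul_one] at this
    linarith

protected theorem ENNReal.div_le_comm {a b c : ENNReal} (hb₀ : b ≠ 0) (hb : b ≠ ⊤) :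
    a / b ≤ c ↔ a / c ≤ b := by
  rw [ENNReal.div_le_iff_le_mul (.inl hb₀) (.inl hb),
    ENNReal.div_le_iff_le_mul (.inr hb) (.inr hb₀), mul_comm]

theorem ENNReal.ofReal_div_two_mul_le_iff {ε ξ : ℝ} {α : ENNReal} (hξ : 0 < ξ) (hα : α ≠ 0) :
    ENNReal.ofReal (ε / (2 * ξ)) ≤ α ↔ (ENNReal.ofReal ε / α).toReal ≤ 2 * ξ := by
  have h2ξ : 0 < 2 * ξ := by positivity
  rw [ENNReal.ofReal_div_of_pos h2ξ,
    ENNReal.div_le_comm (ENNReal.ofReal_pos.mpr h2ξ).ne' ENNReal.ofReal_ne_top,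
    ENNReal.le_ofReal_iff_toReal_le (ENNReal.div_ne_top ENNReal.ofReal_ne_top hα) h2ξ.le]

theorem stmt_17_general (S : Type*) [Fintype S] (ε : S → ℝ)
    (α : S → ENNReal) (hα : ∀ v, 0 < α v) :
    (∀ ξ : S → ℝ, (∀ v, 0 ≤ ξ v) → (∀ v, ξ v ≤ 1) → ∑ v, ξ v = 1 →
        ∃ v, ξ v ≠ 0 ∧ ENNReal.ofReal (ε v / (2 * ξ v)) ≤ α v) ↔
      ∑ v, ENNReal.ofReal (ε v) / α v ≤ 2 := by
  have hfin : ∀ v, ENNReal.ofReal (ε v) / α v ≠ ⊤ :=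
    fun v ↦ ENNReal.div_ne_top ENNReal.ofReal_ne_top (hα v).ne'
  have hsum : ∑ v, ENNReal.ofReal (ε v) / α v ≤ 2 ↔
      ∑ v, (ENNReal.ofReal (ε v) / α v).toReal ≤ 2 := by
    rw [← ENNReal.toReal_sum fun v _ ↦ hfin v,
      ← ENNReal.toReal_le_toReal (ENNReal.sum_ne_top.mpr fun v _ ↦ hfin v) ENNReal.ofNat_ne_top,
      ENNReal.toReal_ofNat]
  rw [hsum, ← forall_mem_stdSimplex_exists_le_mul_iff (fun v ↦ ENNReal.toReal_nonneg) zero_le_two]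
  refine forall_congr' fun ξ ↦ ⟨fun h hξ ↦ ?_, fun h hξ_nonneg _ hξ_sum ↦ ?_⟩
  · obtain ⟨v, hv, hle⟩ := h hξ.1 (fun v ↦ (mem_Icc_of_mem_stdSimplex hξ v).2) hξ.2
    exact ⟨v, hv, (ENNReal.ofReal_div_two_mul_le_iff
      ((hξ.1 v).lt_of_ne' hv) (hα v).ne').mp hle⟩
  · obtain ⟨v, hv, hle⟩ := h ⟨hξ_nonneg, hξ_sum⟩
    exact ⟨v, hv, (ENNReal.ofReal_div_two_mul_le_iff
      ((hξ_nonneg v).lt_of_ne' hv) (hα v).ne').mpr hle⟩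

/-- The equivalence (A) ⟺ (B) of Proposition 7.3 in the case `R_v = 2/ε_v`:
"for every weighting function `ξ` there is a `v` with `ξ_v ≠ 0` and
`α_v ≥ ε_v/(2ξ_v)`" if and only if `∑_v ε_v/α_v ≤ 2` (with `ε_v/∞ = 0`).
Here `α_v ∈ (0,∞]` is modelled in `ℝ≥0∞`. -/
theorem stmt_17 (S : Type*) [Fintype S] (ε : S → ℝ) (hε : ∀ v, 0 < ε v)
    (α : S → ENNReal) (hα : ∀ v, 0 < α v) :
    (∀ ξ : S → ℝ, (∀ v, 0 ≤ ξ v) → (∀ v, ξ v ≤ 1) → ∑ v, ξ v = 1 →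
        ∃ v, ξ v ≠ 0 ∧ ENNReal.ofReal (ε v / (2 * ξ v)) ≤ α v) ↔
      ∑ v, ENNReal.ofReal (ε v) / α v ≤ 2 :=
  stmt_17_general S ε α hα
end
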